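/- Let τ ∈ ℂ and let U = { t ∈ ℂ : 1 − τt ∉ (−∞, 0] }. Define f : U × ℂ → ℂ by f(t,w) = (1 − τt)^{−1/2} e^{(t/(1−τt)) w²}, using the principal square root. Then f(0,w) = 1 for all w, and f satisfies the evolution equation ∂_t f(t,w) = (τ²/4) ∂_w² f(t,w) + τ w ∂_w f(t,w) + (w² + τ/2) f(t,w) for all (t,w) ∈ U × ℂ. Hence f(t,·) is the real-analytic solution giving the τ-expression :e_*^{t w_*²}:_τ of the *-exponential of w_*². -/

import Mathlib

/-!
For fixed `t`, `w ↦ f(t,w)` is a Gaussian `P · exp(b w²)` with `b = t/(1 - τt)`, whose first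
and second derivatives are `2bw · f` and `(2b + 4b²w²) · f`. The right-hand side is therefore
`(τ/2 · (1 + τb) + w² (1 + τb)²) · f`, and `1 + τb = 1/(1 - τt)` turns it into
`(τ/(2(1 - τt)) + w²/(1 - τt)²) · f`, the `t`-derivative of `f` computed from the chain rule.
-/

open Complex

/-- `f(t,w) = (1 − τt)^{−1/2} e^{(t/(1−τt)) w²}` (principal square root), the
`τ`-expression `:e_*^{t w_*²}:_τ` of the `*`-exponential of `w_*²`. -/
noncomputable def starExpQuad (τ t w : ℂ) : ℂ :=
  (1 - τ * t) ^ (-(1 / 2) : ℂ) * Complex.exp (t / (1 - τ * t) * w ^ 2)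

section Gaussian

variable (P c : ℂ)

theorem hasDerivAt_const_mul_cexp_mul_sq (w : ℂ) :
    HasDerivAt (fun w => P * cexp (c * w ^ 2)) (2 * c * w * (P * cexp (c * w ^ 2))) w := by
  have h := (((hasDerivAt_pow 2 w).const_mul c).cexp).const_mul P
  exact h.congr_deriv (by push_cast; ring)

theorem deriv_const_mul_cexp_mul_sq :
    deriv (fun w => P * cexp (c * w ^ 2)) = fun w => 2 * c * w * (P * cexp (c * w ^ 2)) :=
  funext fun w => (hasDerivAt_const_mul_cexp_mul_sq P c w).deriv

theorem deriv_deriv_const_mul_cexp_mul_sq (w : ℂ) :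
    deriv (deriv fun w => P * cexp (c * w ^ 2)) w =
      (2 * c + 4 * c ^ 2 * w ^ 2) * (P * cexp (c * w ^ 2)) := by
  rw [deriv_const_mul_cexp_mul_sq]
  have h := ((hasDerivAt_id' w).const_mul (2 * c)).fun_mul (hasDerivAt_const_mul_cexp_mul_sq P c w)
  rw [h.deriv]
  ring

end Gaussian

theorem hasDerivAt_one_sub_mul (τ t : ℂ) : HasDerivAt (fun t => 1 - τ * t) (-τ) t := by
  simpa using ((hasDerivAt_id t).const_mul τ).const_sub 1

theorem hasDerivAt_one_sub_mul_cpow_neg_half {τ t : ℂ} (h : 1 - τ * t ∈ slitPlane) :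
    HasDerivAt (fun t => (1 - τ * t) ^ (-(1 / 2) : ℂ))
      (τ / (2 * (1 - τ * t)) * (1 - τ * t) ^ (-(1 / 2) : ℂ)) t := by
  convert (hasDerivAt_one_sub_mul τ t).cpow_const h using 1
  rw [cpow_sub _ _ (slitPlane_ne_zero h), cpow_one]
  field_simp [slitPlane_ne_zero h]

theorem hasDerivAt_div_one_sub_mul {τ t : ℂ} (h : 1 - τ * t ≠ 0) :
    HasDerivAt (fun t => t / (1 - τ * t)) (1 / (1 - τ * t) ^ 2) t :=
  ((hasDerivAt_id' t).fun_div (hasDerivAt_one_sub_mul τ t) h).congr_deriv (by field_simp; ring)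

theorem hasDerivAt_starExpQuad_time {τ t : ℂ} (w : ℂ) (h : 1 - τ * t ∈ slitPlane) :
    HasDerivAt (fun t => starExpQuad τ t w)
      ((τ / (2 * (1 - τ * t)) + w ^ 2 / (1 - τ * t) ^ 2) * starExpQuad τ t w) t := by
  have hprod := (hasDerivAt_one_sub_mul_cpow_neg_half h).fun_mul
    ((hasDerivAt_div_one_sub_mul (slitPlane_ne_zero h)).mul_const (w ^ 2)).cexp
  refine hprod.congr_deriv ?_
  simp only [starExpQuad]
  field_simp

/-- For every `τ ∈ ℂ`: `f(0,w) = 1`, and on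
`U = {t : 1 − τt ∉ (−∞,0]}` the function `f` solves the evolution equation
`∂_t f = (τ²/4) ∂_w² f + τ w ∂_w f + (w² + τ/2) f`, i.e. `d/dt f_t = :w_*²:_τ *_τ f_t`
with `f_0 = 1`. -/
theorem starExpQuad_evolution (τ : ℂ) :
    (∀ w : ℂ, starExpQuad τ 0 w = 1) ∧
    (∀ t w : ℂ, (1 - τ * t) ∉ {z : ℂ | z.re ≤ 0 ∧ z.im = 0} →
      deriv (fun t' : ℂ => starExpQuad τ t' w) t =
        τ ^ 2 / 4 * deriv (deriv (fun w' : ℂ => starExpQuad τ t w')) w +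
          τ * w * deriv (fun w' : ℂ => starExpQuad τ t w') w +
          (w ^ 2 + τ / 2) * starExpQuad τ t w) := by
  refine ⟨fun w => by simp [starExpQuad], fun t w hU => ?_⟩
  have hslit : 1 - τ * t ∈ slitPlane := by
    rw [mem_slitPlane_iff]
    by_contra! hneg
    exact hU hneg
  have hne : 1 - τ * t ≠ 0 := slitPlane_ne_zero hslit
  rw [(hasDerivAt_starExpQuad_time w hslit).deriv]
  simp only [starExpQuad]
  rw [deriv_deriv_const_mul_cexp_mul_sq, deriv_const_mul_cexp_mul_sq]
  field_simp
  ring
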